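/- arXiv:2503.16821 — 5 statements merged into one kernel-verified Lean document; each statement's English description precedes it below -/
import Mathlib

section
/- Let Γ be a finite abelian group and let (x_g)_{g∈Γ} be elements of a commutative ring (or the complex numbers). Define the group matrix M(Γ) indexed by Γ with entries M(Γ)_{g,h} = x_{g⁻¹h}. Then det(M(Γ)) = ∏_{χ} (∑_{g∈Γ} χ(g) x_g), where χ runs over all characters of Γ (homomorphisms Γ → ℂ^×). -/
/-- **Dedekind's theorem**: the determinant of the group matrix of a finite abelian
group `Γ` factors as the product over all characters `χ : Γ →* ℂˣ` of `∑ g, χ g * x g`. -/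
theorem group_determinant_abelian {Γ : Type*} [CommGroup Γ] [Fintype Γ] [DecidableEq Γ]
    [Fintype (Γ →* ℂˣ)] (x : Γ → ℂ) :
    (Matrix.of fun g h : Γ => x (g⁻¹ * h)).det =
      ∏ χ : Γ →* ℂˣ, ∑ g : Γ, (χ g : ℂ) * x g := by
  classical
  have hne : NeZero (Monoid.exponent Γ) := ⟨Monoid.exponent_ne_zero_of_finite⟩
  obtain ⟨e⟩ := CommGroup.monoidHom_mulEquiv_of_hasEnoughRootsOfUnity Γ ℂ
  set M : Matrix Γ Γ ℂ := Matrix.of fun g h : Γ => x (g⁻¹ * h) with hM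
  set P : Matrix Γ Γ ℂ := Matrix.of fun g h : Γ => ((e.symm h) g : ℂ) with hP
  set D : Matrix Γ Γ ℂ :=
    Matrix.diagonal (fun h : Γ => ∑ k : Γ, ((e.symm h) k : ℂ) * x k) with hD
  set Q : Matrix Γ Γ ℂ := Matrix.of fun g h : Γ => ((((e.symm g) h)⁻¹ : ℂˣ) : ℂ) with hQ
  have orth : Q * P = (Fintype.card Γ : ℂ) • 1 := by
    ext g h
    have hiff : ((Units.coeHom ℂ).comp ((e.symm g)⁻¹ * e.symm h) = 1) ↔ g = h := by
      constructor
      · intro H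
        have h1 : (e.symm g)⁻¹ * e.symm h = 1 := by
          ext k
          have := DFunLike.congr_fun H k
          simpa [Units.ext_iff] using this
        have h2 : e.symm g = e.symm h := by rwa [inv_mul_eq_one] at h1
        exact e.symm.injective h2
      · rintro rfl; ext k; simp
    have key := sum_hom_units ((Units.coeHom ℂ).comp ((e.symm g)⁻¹ * e.symm h))
    rw [Matrix.mul_apply, Matrix.smul_apply, Matrix.one_apply]
    have lhs_eq : ∑ k : Γ, Q g k * P k h
        = ∑ k : Γ, ((Units.coeHom ℂ).comp ((e.symm g)⁻¹ * e.symm h)) k := by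
      apply Finset.sum_congr rfl
      intro k _
      simp [Q, P, Units.val_mul]
    rw [lhs_eq, key]
    by_cases hgh : g = h
    · rw [if_pos (hiff.mpr hgh), if_pos hgh]; simp
    · rw [if_neg (fun H => hgh (hiff.mp H)), if_neg hgh]; simp
  have hMP : M * P = P * D := by
    ext g h
    rw [Matrix.mul_apply, Matrix.mul_apply]
    have rhs : ∑ k : Γ, P g k * D k h
        = ((e.symm h) g : ℂ) * ∑ k : Γ, ((e.symm h) k : ℂ) * x k := by
      rw [Finset.sum_eq_single h]
      · simp [P, D, Matrix.diagonal]
      · intro k _ hk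
        simp [D, Matrix.diagonal, hk]
      · simp
    rw [rhs, ← Equiv.sum_comp (Equiv.mulLeft g) (fun k => M g k * P k h), Finset.mul_sum]
    apply Finset.sum_congr rfl
    intro k _
    simp only [M, P, Matrix.of_apply, Equiv.coe_mulLeft, inv_mul_cancel_left, map_mul,
      Units.val_mul]
    ring
  have hdetP : P.det ≠ 0 := by
    intro h0
    have := congrArg Matrix.det orth
    rw [Matrix.det_mul, h0, mul_zero, Matrix.det_smul, Matrix.det_one, mul_one] at this
    have hcard : (Fintype.card Γ : ℂ) ≠ 0 := by exact_mod_cast Fintype.card_ne_zero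
    exact (pow_ne_zero _ hcard) this.symm
  have hdet := congrArg Matrix.det hMP
  rw [Matrix.det_mul, Matrix.det_mul, Matrix.det_diagonal, mul_comm P.det] at hdet
  have hMdet : M.det = ∏ h : Γ, ∑ k : Γ, ((e.symm h) k : ℂ) * x k :=
    mul_right_cancel₀ hdetP hdet
  rw [hMdet]
  exact Fintype.prod_equiv e.symm.toEquiv _ _ (fun h => rfl)
end

section
/- Let Γ be a finite group and let (x_g)_{g∈Γ} be complex numbers. Define the group matrix M(Γ) indexed by Γ with entries M(Γ)_{g,h} = x_{g⁻¹h}. Then det(M(Γ)) = ∏_ρ det(∑_{h∈Γ} x_h · ρ(h))^{deg ρ}, where ρ runs over a complete set of inequivalent irreducible complex representations of Γ. -/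
open scoped Matrix

/-!
The representations assemble into an algebra map `Φ : ℂ[Γ] → ∏ⱼ Mat_{dⱼ}(ℂ)`. By Schur's
orthogonality relations the matrix coefficients `g ↦ ρⱼ(g)_{pq}` are linearly independent, and
there are `∑ dⱼ² = |Γ|` of them, so `Φ` is an isomorphism. The group determinant is the norm of
`a = ∑ x_g g`, i.e. the determinant of left multiplication by `a` on `ℂ[Γ]`; norms are preserved
by algebra isomorphisms, and left multiplication by `A` on `Mat_d` is `d` copies of `A`, which
gives the factor `det (A) ^ d`.
-/

namespace Matrix

variable {R : Type*} [CommRing R]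

theorem det_blockDiagonal' {ι : Type*} [Fintype ι] [DecidableEq ι] {n : ι → Type*}
    [∀ i, Fintype (n i)] [∀ i, DecidableEq (n i)] (M : ∀ i, Matrix (n i) (n i) R) :
    (blockDiagonal' M).det = ∏ i, (M i).det := by
  -- block triangularity holds for any linear order on the blocks
  let : LinearOrder ι := LinearOrder.lift' (Fintype.equivFin ι) (Equiv.injective _)
  rw [(blockTriangular_blockDiagonal' M).det_fintype]
  refine Finset.prod_congr rfl fun i _ => ?_
  let e : n i ≃ {a : Σ j, n j // a.1 = i} :=
    { toFun := fun a => ⟨⟨i, a⟩, rfl⟩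
      invFun := fun a => a.2 ▸ a.1.2
      left_inv := fun a => rfl
      right_inv := by rintro ⟨⟨j, v⟩, rfl⟩; rfl }
  rw [← det_submatrix_equiv_self e]
  congr 1
  ext a b
  simp [e, toSquareBlock_def, blockDiagonal'_apply_eq]

theorem det_mulLeft {n : Type*} [Fintype n] [DecidableEq n] (A : Matrix n n R) :
    LinearMap.det (LinearMap.mulLeft R A) = A.det ^ Fintype.card n := by
  have hkronecker : LinearMap.toMatrix (stdBasis R n n) (stdBasis R n n) (LinearMap.mulLeft R A) =
      kroneckerMap (· * ·) A (1 : Matrix n n R) := by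
    have repr_apply (M : Matrix n n R) (i j : n) : (stdBasis R n n).repr M (i, j) = M i j := by
      simp [stdBasis]
    ext ⟨i, j⟩ ⟨k, l⟩
    rw [LinearMap.toMatrix_apply, stdBasis_eq_single, repr_apply, LinearMap.mulLeft_apply]
    by_cases h : j = l
    · subst h; simp
    · simp [mul_single_apply_of_ne (hbj := h), h]
  rw [← LinearMap.det_toMatrix (stdBasis R n n), hkronecker, det_kronecker, det_one, one_pow,
    mul_one]

theorem mul_single_one_mul_apply {l n m o : Type*} [Fintype n] [DecidableEq n] [Fintype m]
    [DecidableEq m] (M : Matrix l n R) (N : Matrix m o R) (p : n) (a : m) (q : l) (b : o) :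
    (M * single p a (1 : R) * N) q b = M q p * N a b := by
  simp [mul_apply, single_apply, ite_and]

end Matrix

theorem LinearMap.det_piMap {R ι : Type*} [CommRing R] [Fintype ι] [DecidableEq ι]
    {M : ι → Type*} [∀ i, AddCommGroup (M i)] [∀ i, Module R (M i)]
    [∀ i, Module.Free R (M i)] [∀ i, Module.Finite R (M i)] (f : ∀ i, M i →ₗ[R] M i) :
    LinearMap.det (LinearMap.piMap f) = ∏ i, LinearMap.det (f i) := by
  let b := fun i => Module.Free.chooseBasis R (M i)
  rw [← LinearMap.det_toMatrix (Pi.basis b)]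
  simp_rw [← LinearMap.det_toMatrix (b _)]
  rw [← Matrix.det_blockDiagonal']
  congr 1
  ext ⟨i, a⟩ ⟨j, c⟩
  rw [LinearMap.toMatrix_apply, Pi.basis_repr, Pi.basis_apply]
  by_cases h : i = j
  · subst h
    simp [Matrix.blockDiagonal'_apply_eq, LinearMap.toMatrix_apply]
  · simp [Matrix.blockDiagonal'_apply_ne _ _ _ h, Pi.single_eq_of_ne h]

theorem Algebra.norm_pi_matrix {R ι : Type*} [CommRing R] [Fintype ι] [DecidableEq ι]
    {n : ι → Type*} [∀ i, Fintype (n i)] [∀ i, DecidableEq (n i)]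
    (a : ∀ i, Matrix (n i) (n i) R) :
    Algebra.norm R a = ∏ i, (a i).det ^ Fintype.card (n i) := by
  have : Algebra.lmul R _ a = LinearMap.piMap fun i => LinearMap.mulLeft R (a i) := rfl
  rw [Algebra.norm_apply, this, LinearMap.det_piMap]
  simp_rw [Matrix.det_mulLeft]

namespace MonoidAlgebra

theorem lift_apply_eq_sum {R A G : Type*} [CommSemiring R] [Semiring A] [Algebra R A] [Monoid G]
    [Fintype G] (F : G →* A) (a : MonoidAlgebra R G) :
    lift R A G F a = ∑ g, a.coeff g • F g := by
  rw [lift_apply, Finsupp.sum_fintype _ _ fun g => zero_smul R (F g)]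

theorem norm_eq_det {R G : Type*} [CommRing R] [Group G] [Fintype G] [DecidableEq G]
    (a : MonoidAlgebra R G) :
    Algebra.norm R a = (Matrix.of fun g h => a.coeff (g⁻¹ * h)).det := by
  rw [Algebra.norm_eq_matrix_det (basis G R), ← Matrix.det_submatrix_equiv_self (Equiv.inv G)]
  congr 1
  ext g h
  simp [Algebra.leftMulMatrix_apply, LinearMap.toMatrix_apply, basis]

end MonoidAlgebra

section Schur

variable {K G : Type*} [Field K] [Group G]
variable {n m : Type*} [Fintype n] [DecidableEq n] [Fintype m] [DecidableEq m]

def IsIrreducibleMatrixRep (ρ : G →* Matrix n n K) : Prop :=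
  ∀ U : Submodule K (n → K), (∀ g, ∀ v ∈ U, ρ g *ᵥ v ∈ U) → U = ⊥ ∨ U = ⊤

def IntertwinersTrivial (ρ : G →* Matrix n n K) (σ : G →* Matrix m m K) : Prop :=
  ∀ T : Matrix n m K, (∀ g, ρ g * T = T * σ g) → T = 0

theorem IsIrreducibleMatrixRep.exists_eq_smul_one [IsAlgClosed K]
    {ρ : G →* Matrix n n K} (hρ : IsIrreducibleMatrixRep ρ) {T : Matrix n n K}
    (hT : ∀ g, ρ g * T = T * ρ g) :
    ∃ c : K, T = c • 1 := by
  cases isEmpty_or_nonempty n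
  · exact ⟨0, Subsingleton.elim _ _⟩
  obtain ⟨μ, hμ⟩ := Module.End.exists_eigenvalue T.mulVecLin
  have hinvariant : ∀ g, ∀ v ∈ Module.End.eigenspace T.mulVecLin μ,
      ρ g *ᵥ v ∈ Module.End.eigenspace T.mulVecLin μ := by
    intro g v hv
    rw [Module.End.mem_eigenspace_iff, Matrix.mulVecLin_apply] at hv ⊢
    rw [Matrix.mulVec_mulVec, ← hT, ← Matrix.mulVec_mulVec, hv, Matrix.mulVec_smul]
  refine ⟨μ, ?_⟩
  rcases hρ _ hinvariant with h | h
  · exact absurd h hμ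
  refine Matrix.toLin'.injective (LinearMap.ext fun v => ?_)
  have hv : v ∈ Module.End.eigenspace T.mulVecLin μ := h ▸ Submodule.mem_top
  simpa using Module.End.mem_eigenspace_iff.mp hv

variable [Fintype G]

def intertwinerAverage (ρ : G →* Matrix n n K) (σ : G →* Matrix m m K) (E : Matrix n m K) :
    Matrix n m K :=
  ∑ g, ρ g⁻¹ * E * σ g

theorem intertwinerAverage_intertwines (ρ : G →* Matrix n n K) (σ : G →* Matrix m m K)
    (E : Matrix n m K) (h : G) :
    ρ h * intertwinerAverage ρ σ E = intertwinerAverage ρ σ E * σ h := by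
  rw [intertwinerAverage, Matrix.mul_sum, Matrix.sum_mul]
  refine Fintype.sum_equiv (Equiv.mulRight h⁻¹) _ _ fun g => ?_
  simp only [Equiv.coe_mulRight, mul_inv_rev, inv_inv, map_mul, ← Matrix.mul_assoc]
  rw [Matrix.mul_assoc _ (σ h⁻¹), ← map_mul σ, inv_mul_cancel, map_one, Matrix.mul_one]

theorem trace_intertwinerAverage (ρ : G →* Matrix n n K) (E : Matrix n n K) :
    (intertwinerAverage ρ ρ E).trace = Fintype.card G * E.trace := by
  have (g : G) : (ρ g⁻¹ * E * ρ g).trace = E.trace := by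
    rw [Matrix.trace_mul_cycle, ← map_mul, mul_inv_cancel, map_one, Matrix.one_mul]
  simp [intertwinerAverage, Matrix.trace_sum, this]

theorem intertwinerAverage_single_apply (ρ : G →* Matrix n n K) (σ : G →* Matrix m m K)
    (p q : n) (a b : m) :
    intertwinerAverage ρ σ (Matrix.single p a 1) q b = ∑ g, ρ g⁻¹ q p * σ g a b := by
  simp only [intertwinerAverage, Matrix.sum_apply, Matrix.mul_single_one_mul_apply]

variable [IsAlgClosed K] [CharZero K]

theorem IsIrreducibleMatrixRep.intertwinerAverage_eq_smul_one {ρ : G →* Matrix n n K}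
    (hρ : IsIrreducibleMatrixRep ρ) (E : Matrix n n K) :
    intertwinerAverage ρ ρ E = (Fintype.card G * E.trace / Fintype.card n) • 1 := by
  cases isEmpty_or_nonempty n
  · exact Subsingleton.elim _ _
  obtain ⟨c, hc⟩ := hρ.exists_eq_smul_one (intertwinerAverage_intertwines ρ ρ E)
  have htrace := trace_intertwinerAverage ρ E
  rw [hc, Matrix.trace_smul, Matrix.trace_one, smul_eq_mul] at htrace
  rw [hc, ← htrace, mul_div_cancel_right₀ _ (Nat.cast_ne_zero.mpr Fintype.card_ne_zero)]

theorem IsIrreducibleMatrixRep.sum_inv_apply_mul_apply {ρ : G →* Matrix n n K}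
    (hρ : IsIrreducibleMatrixRep ρ) (p q a b : n) :
    ∑ g, ρ g⁻¹ q p * ρ g a b =
      if p = a ∧ q = b then (Fintype.card G / Fintype.card n : K) else 0 := by
  rw [← intertwinerAverage_single_apply, hρ.intertwinerAverage_eq_smul_one]
  by_cases hpa : p = a <;> by_cases hqb : q = b <;> simp [hpa, hqb]

end Schur

section MatrixCoefficients

variable {K G ι : Type*} [Field K] [Group G] {n : ι → Type*} [∀ i, Fintype (n i)]
  [∀ i, DecidableEq (n i)]

def matrixCoeff (ρ : ∀ i, G →* Matrix (n i) (n i) K) (t : Σ i, n i × n i) (g : G) : K :=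
  ρ t.1 g t.2.1 t.2.2

variable [Fintype G] [DecidableEq ι]
variable [IsAlgClosed K] [CharZero K] {ρ : ∀ i, G →* Matrix (n i) (n i) K}

theorem sum_inv_apply_mul_matrixCoeff (hirr : ∀ i, IsIrreducibleMatrixRep (ρ i))
    (hinequiv : ∀ i j, i ≠ j → IntertwinersTrivial (ρ i) (ρ j))
    (i : ι) (p q : n i) (t : Σ i, n i × n i) :
    ∑ g, ρ i g⁻¹ q p * matrixCoeff ρ t g =
      if t = ⟨i, (p, q)⟩ then (Fintype.card G / Fintype.card (n i) : K) else 0 := by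
  obtain ⟨j, a, b⟩ := t
  by_cases hij : i = j
  · subst hij
    simp only [matrixCoeff]
    rw [(hirr i).sum_inv_apply_mul_apply]
    simp [eq_comm]
  · simp only [matrixCoeff]
    rw [← intertwinerAverage_single_apply,
      hinequiv i j hij _ (intertwinerAverage_intertwines _ _ _)]
    simp [Ne.symm hij]

variable [Fintype ι]

theorem linearIndependent_matrixCoeff (hirr : ∀ i, IsIrreducibleMatrixRep (ρ i))
    (hinequiv : ∀ i j, i ≠ j → IntertwinersTrivial (ρ i) (ρ j)) :
    LinearIndependent K (matrixCoeff ρ) := by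
  rw [Fintype.linearIndependent_iff]
  rintro c hc ⟨i, p, q⟩
  -- pair with `g ↦ ρ i g⁻¹ q p`: by orthogonality only the `⟨i, (p, q)⟩` term survives
  have hcoeff : c ⟨i, (p, q)⟩ * (Fintype.card G / Fintype.card (n i)) = 0 := calc
    _ = ∑ t, c t * ∑ g, ρ i g⁻¹ q p * matrixCoeff ρ t g := by
      simp [sum_inv_apply_mul_matrixCoeff hirr hinequiv]
    _ = ∑ g, ρ i g⁻¹ q p * (∑ t, c t • matrixCoeff ρ t) g := by
      simp only [Finset.mul_sum, Finset.sum_apply, Pi.smul_apply, smul_eq_mul]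
      rw [Finset.sum_comm]
      simp only [mul_left_comm]
    _ = 0 := by simp only [hc, Pi.zero_apply, mul_zero, Finset.sum_const_zero]
  have : Nonempty (n i) := ⟨p⟩
  exact (mul_eq_zero.mp hcoeff).resolve_right (div_ne_zero (Nat.cast_ne_zero.mpr
    Fintype.card_ne_zero) (Nat.cast_ne_zero.mpr Fintype.card_ne_zero))

theorem MonoidAlgebra.lift_pi_injective (hirr : ∀ i, IsIrreducibleMatrixRep (ρ i))
    (hinequiv : ∀ i j, i ≠ j → IntertwinersTrivial (ρ i) (ρ j))
    (hcard : ∑ i, Fintype.card (n i) ^ 2 = Fintype.card G) :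
    Function.Injective (lift K (∀ i, Matrix (n i) (n i) K) G (MonoidHom.pi ρ)) := by
  have hspan : Submodule.span K (Set.range (matrixCoeff ρ)) = ⊤ :=
    (linearIndependent_matrixCoeff hirr hinequiv).span_eq_top_of_card_eq_finrank' (by
      simp [Module.finrank_fintype_fun_eq_card, ← hcard, sq])
  rw [injective_iff_map_eq_zero]
  intro a ha
  have hcoeff : ∀ t, dotProductBilin K K (fun g => a.coeff g) (matrixCoeff ρ t) = 0 := by
    rintro ⟨i, p, q⟩
    have := congrFun (congrFun (congrFun ha i) p) q
    simpa [lift_apply_eq_sum, Matrix.sum_apply, dotProduct, matrixCoeff] using this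
  have hzero : dotProductBilin K K (fun g => a.coeff g) = 0 := LinearMap.ext_on_range hspan hcoeff
  have := dotProduct_eq_zero_iff.mp fun w => LinearMap.congr_fun hzero w
  exact MonoidAlgebra.ext (Finsupp.ext fun g => congrFun this g)

theorem MonoidAlgebra.lift_pi_bijective (hirr : ∀ i, IsIrreducibleMatrixRep (ρ i))
    (hinequiv : ∀ i j, i ≠ j → IntertwinersTrivial (ρ i) (ρ j))
    (hcard : ∑ i, Fintype.card (n i) ^ 2 = Fintype.card G) :
    Function.Bijective (lift K (∀ i, Matrix (n i) (n i) K) G (MonoidHom.pi ρ)) := by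
  have hinj := lift_pi_injective hirr hinequiv hcard
  have hfinrank : Module.finrank K (MonoidAlgebra K G) =
      Module.finrank K (∀ i, Matrix (n i) (n i) K) := by
    simp [Module.finrank_eq_card_basis (basis G K), Module.finrank_pi_fintype,
      Module.finrank_matrix, ← hcard, sq]
  exact ⟨hinj, (LinearMap.injective_iff_surjective_of_finrank_eq_finrank hfinrank
    (f := (lift K _ G (MonoidHom.pi ρ)).toLinearMap)).mp hinj⟩

end MatrixCoefficients

/-- **Frobenius' group determinant theorem** (Corollary 2 in the paper): for a finite
group `Γ` and a complete system `ρ₁, …, ρ_k` of pairwise inequivalent irreducible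
complex matrix representations (irreducibility: no nontrivial invariant subspace;
inequivalence: by Schur's lemma, no nonzero intertwiner; completeness:
`∑ d_j² = |Γ|`), the group determinant factors as
`det M(Γ) = ∏_j det (∑_h x_h • ρ_j h) ^ d_j`. -/
theorem group_determinant_nonabelian {Γ : Type} [Group Γ] [Fintype Γ] [DecidableEq Γ]
    (x : Γ → ℂ) {k : ℕ} (d : Fin k → ℕ)
    (ρ : ∀ j : Fin k, Γ →* Matrix (Fin (d j)) (Fin (d j)) ℂ)
    (hirr : ∀ j : Fin k, ∀ U : Submodule ℂ (Fin (d j) → ℂ),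
      (∀ g : Γ, ∀ v ∈ U, (ρ j g).mulVec v ∈ U) → U = ⊥ ∨ U = ⊤)
    (hinequiv : ∀ i j : Fin k, i ≠ j →
      ∀ T : Matrix (Fin (d i)) (Fin (d j)) ℂ,
        (∀ g : Γ, ρ i g * T = T * ρ j g) → T = 0)
    (hcomplete : ∑ j : Fin k, (d j) ^ 2 = Fintype.card Γ) :
    (Matrix.of fun g h : Γ => x (g⁻¹ * h)).det =
      ∏ j : Fin k, (∑ h : Γ, x h • ρ j h).det ^ (d j) := by
  let a : MonoidAlgebra ℂ Γ := .ofCoeff (Finsupp.equivFunOnFinite.symm x)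
  let Φ := AlgEquiv.ofBijective _
    (MonoidAlgebra.lift_pi_bijective hirr hinequiv (by simpa using hcomplete))
  calc _ = Algebra.norm ℂ a := (MonoidAlgebra.norm_eq_det a).symm
    _ = Algebra.norm ℂ (Φ a) := (Algebra.norm_eq_of_algEquiv Φ a).symm
    _ = _ := by simp [Algebra.norm_pi_matrix, Φ, a, MonoidAlgebra.lift_apply_eq_sum]
end

section
/- Let Γ be a finite abelian group, D a finite digraph, α : A(D) → Γ a voltage assignment, and W a weighted matrix of D. With W_h and W(D^α) as in the covering construction, det(W(D^α)) = ∏_{χ} det(∑_{h∈Γ} χ(h) · W_h), where χ runs over all characters of Γ. -/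
lemma charSum_eq_zero {Γ : Type} [CommGroup Γ] [Fintype Γ] [Fintype (Γ →* ℂˣ)]
    (s : Γ) (hs : s ≠ 1) : ∑ ψ : Γ →* ℂˣ, ((ψ s : ℂ)) = 0 := by
  haveI : NeZero ((Monoid.exponent Γ : ℂ)) :=
    ⟨by exact_mod_cast Monoid.exponent_ne_zero_of_finite⟩
  obtain ⟨φ, hφ⟩ := CommGroup.exists_apply_ne_one_of_hasEnoughRootsOfUnity Γ ℂ hs
  let E : (Γ →* ℂˣ) →* ℂ :=
    { toFun := fun ψ => (ψ s : ℂ)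
      map_one' := by simp
      map_mul' := by intro a b; simp }
  have hE : E ≠ 1 := by
    intro h
    apply hφ
    have : E φ = 1 := by rw [h]; rfl
    exact Units.ext (by simpa [E] using this)
  exact sum_hom_units_eq_zero E hE

lemma charSum_eq {Γ : Type} [CommGroup Γ] [Fintype Γ] [DecidableEq Γ]
    [Fintype (Γ →* ℂˣ)] (s : Γ) :
    ∑ ψ : Γ →* ℂˣ, ((ψ s : ℂ)) =
      if s = 1 then (Fintype.card (Γ →* ℂˣ) : ℂ) else 0 := by
  split_ifs with h
  · subst h; simp
  · exact charSum_eq_zero s h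

/-- **Corollary 1**: for a finite abelian voltage group `Γ`, the determinant of the
weighted matrix of the `Γ`-covering of a digraph factors over the characters of `Γ`:
`det W(D^α) = ∏_χ det (∑_h χ(h) • W_h)`. -/
theorem det_weighted_matrix_abelian_covering {Γ : Type} [CommGroup Γ] [Fintype Γ]
    [DecidableEq Γ] [Fintype (Γ →* ℂˣ)]
    {V : Type} [Fintype V] [DecidableEq V]
    (A : V → V → Prop) [∀ u v : V, Decidable (A u v)]
    (w : V → V → ℂ) (α : V → V → Γ)
    (Wh : Γ → Matrix V V ℂ)
    (hWh : ∀ h : Γ, ∀ u v : V, Wh h u v = if A u v ∧ α u v = h then w u v else 0)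
    (Wcov : Matrix (V × Γ) (V × Γ) ℂ)
    (hWcov : ∀ p q : V × Γ,
      Wcov p q = if A p.1 q.1 ∧ q.2 = p.2 * α p.1 q.1 then w p.1 q.1 else 0) :
    Wcov.det = ∏ χ : Γ →* ℂˣ, (∑ h : Γ, (χ h : ℂ) • Wh h).det := by
  classical
  haveI : NeZero ((Monoid.exponent Γ : ℂ)) :=
    ⟨by exact_mod_cast Monoid.exponent_ne_zero_of_finite⟩
  obtain ⟨me⟩ := CommGroup.monoidHom_mulEquiv_of_hasEnoughRootsOfUnity Γ ℂ
  let e : Γ ≃ (Γ →* ℂˣ) := me.symm.toEquiv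
  set U : Matrix (V × Γ) (V × Γ) ℂ :=
    fun p q => if p.1 = q.1 then ((e q.2) p.2 : ℂ) else 0 with hU
  set U' : Matrix (V × Γ) (V × Γ) ℂ :=
    fun p q => if p.1 = q.1 then ((((e p.2) q.2)⁻¹ : ℂˣ) : ℂ) else 0 with hU'
  set B : Matrix (V × Γ) (V × Γ) ℂ :=
    Matrix.blockDiagonal (fun k : Γ => ∑ h : Γ, ((e k) h : ℂ) • Wh h) with hB
  have hcard : (Fintype.card (Γ →* ℂˣ) : ℂ) = (Fintype.card Γ : ℂ) := by
    rw [Fintype.card_congr e.symm]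
  -- U * U' = card Γ • 1
  have hUU' : U * U' = (Fintype.card Γ : ℂ) • 1 := by
    ext ⟨u, g⟩ ⟨v, k⟩
    rw [Matrix.mul_apply, Fintype.sum_prod_type]
    by_cases huv : u = v
    · subst huv
      rw [Finset.sum_eq_single u
        (fun x _ hxu => Finset.sum_eq_zero fun m _ => by
          simp [hU, (Ne.symm hxu : u ≠ x)])
        (fun h => absurd (Finset.mem_univ u) h)]
      have hterm : ∀ m : Γ,
          U (u, g) (u, m) * U' (u, m) (u, k) = (((e m) (g * k⁻¹) : ℂˣ) : ℂ) := by
        intro m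
        simp only [hU, hU', if_pos rfl]
        rw [map_mul, map_inv]
        push_cast
        ring
      rw [Finset.sum_congr rfl fun m _ => hterm m,
        e.sum_comp (fun ψ : Γ →* ℂˣ => ((ψ (g * k⁻¹) : ℂ))), charSum_eq]
      by_cases hgk : g = k
      · subst hgk
        simp [hcard, Matrix.one_apply]
      · have h1 : g * k⁻¹ ≠ 1 := fun h => hgk (mul_inv_eq_one.mp h)
        simp [h1, Matrix.one_apply, hgk]
    · rw [Finset.sum_eq_zero fun x _ => Finset.sum_eq_zero fun m _ => ?_]
      · simp [Matrix.one_apply, Prod.ext_iff, huv]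
      · by_cases hx : u = x
        · subst hx; simp [hU', huv]
        · simp [hU, hx]
  -- det U ≠ 0
  have hdetU : U.det ≠ 0 := by
    have h := congrArg Matrix.det hUU'
    rw [Matrix.det_mul, Matrix.det_smul, Matrix.det_one, mul_one] at h
    have hc : ((Fintype.card Γ : ℂ)) ^ Fintype.card (V × Γ) ≠ 0 := by
      apply pow_ne_zero
      exact_mod_cast Fintype.card_ne_zero
    exact left_ne_zero_of_mul (h ▸ hc)
  -- the intertwining identity
  have key : Wcov * U = U * B := by
    ext ⟨u, g⟩ ⟨v, k⟩
    rw [Matrix.mul_apply, Matrix.mul_apply, Fintype.sum_prod_type,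
      Fintype.sum_prod_type]
    have hL : ∀ x : V, ∑ m : Γ, Wcov (u, g) (x, m) * U (x, m) (v, k)
        = if x = v then (if A u x then w u x * (((e k) (g * α u x) : ℂˣ) : ℂ) else 0)
          else 0 := by
      intro x
      by_cases hxv : x = v
      · subst hxv
        rw [if_pos rfl]
        by_cases hA : A u x
        · rw [Finset.sum_eq_single (g * α u x)
            (fun m _ hm => by simp [hWcov, hm])
            (fun h => absurd (Finset.mem_univ _) h)]
          simp [hWcov, hU, hA]
        · rw [if_neg hA]
          exact Finset.sum_eq_zero fun m _ => by simp [hWcov, hA]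
      · rw [if_neg hxv]
        exact Finset.sum_eq_zero fun m _ => by simp [hU, hxv]
    have hR : ∀ x : V, ∑ m : Γ, U (u, g) (x, m) * B (x, m) (v, k)
        = if u = x then ((e k) g : ℂ) *
            (if A x v then (((e k) (α x v) : ℂˣ) : ℂ) * w x v else 0) else 0 := by
      intro x
      by_cases hux : u = x
      · subst hux
        rw [if_pos rfl]
        rw [Finset.sum_eq_single k
          (fun m _ hm => by simp [hB, Matrix.blockDiagonal_apply, hm])
          (fun h => absurd (Finset.mem_univ _) h)]
        simp only [hU, hB, if_pos rfl, Matrix.blockDiagonal_apply, if_pos rfl]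
        congr 1
        rw [Matrix.sum_apply]
        simp only [Matrix.smul_apply, smul_eq_mul]
        rw [Finset.sum_eq_single (α u v)
          (fun h _ hh => by simp [hWh, Ne.symm hh])
          (fun h => absurd (Finset.mem_univ _) h)]
        by_cases hA : A u v <;> simp [hWh, hA]
      · rw [if_neg hux]
        exact Finset.sum_eq_zero fun m _ => by simp [hU, hux]
    rw [Finset.sum_congr rfl fun x _ => hL x, Finset.sum_congr rfl fun x _ => hR x]
    simp only [Finset.sum_ite_eq, Finset.sum_ite_eq', Finset.mem_univ, if_pos]
    by_cases hA : A u v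
    · simp only [if_pos hA, map_mul]
      push_cast
      ring
    · simp [hA]
  -- conclude
  have hdet : Wcov.det * U.det = U.det * B.det := by
    rw [← Matrix.det_mul, ← Matrix.det_mul, key]
  have hWB : Wcov.det = B.det := by
    rw [mul_comm] at hdet
    exact mul_left_cancel₀ hdetU hdet
  rw [hWB, hB, Matrix.det_blockDiagonal]
  exact (e.prod_comp fun χ : Γ →* ℂˣ => (∑ h : Γ, (χ h : ℂ) • Wh h).det)
end

section
/- The number of spanning trees of the complete graph K_n on n vertices is n^{n−2} (Cayley's formula), derivable by evaluating (1/n)·∏_{χ≠1}(n − ∑_{g∈Γ} χ(g)) = (1/n)·n^{n−1} for any abelian group Γ of order n. -/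
/-!
Joyal's proof. A tree on `V` with two marked vertices `b` and `r` is the same as a parent
function `f` with root `r` together with the vertex `b`. The path `b, f b, f² b, …, r` is a set
`S` with a linear order, and the rest of `f` is a forest rooted in `S`. An arbitrary endofunction
decomposes in the same way, with `S` its set of periodic points, on which it acts as a
permutation. A finite set has as many linear orders as permutations, so
`n · n · #trees = #(V → V) = nⁿ`.
-/

open Function Set

section RootedForest

variable {V : Type*}

def OrbitsMeet (f : V → V) (S : Set V) : Prop := ∀ x, ∃ k, f^[k] x ∈ S

/-- Rooted forests with root set `S`, each encoded by its parent function. -/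
def rootedForest (S : Set V) : Set (V → V) := {f | (∀ x ∈ S, f x = x) ∧ OrbitsMeet f S}

variable {f g : V → V} {S T : Set V} {r x : V}

lemma OrbitsMeet.of_eqOn_compl (hf : OrbitsMeet f S) (hfg : EqOn f g Sᶜ) : OrbitsMeet g S := by
  intro x
  obtain ⟨k, hk⟩ := hf x
  induction k generalizing x with
  | zero => exact ⟨0, hk⟩
  | succ k ih =>
    by_cases hx : x ∈ S
    · exact ⟨0, hx⟩
    · rw [iterate_succ_apply, hfg hx] at hk
      obtain ⟨m, hm⟩ := ih (g x) hk
      exact ⟨m + 1, hm⟩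

lemma OrbitsMeet.trans (hf : OrbitsMeet f S) (hST : ∀ x ∈ S, ∃ k, f^[k] x ∈ T) :
    OrbitsMeet f T := by
  intro x
  obtain ⟨k, hk⟩ := hf x
  obtain ⟨m, hm⟩ := hST _ hk
  exact ⟨m + k, by rwa [iterate_add_apply]⟩

lemma OrbitsMeet.mono (hf : OrbitsMeet f S) (hST : S ⊆ T) : OrbitsMeet f T :=
  fun x => (hf x).imp fun _ hk => hST hk

lemma mem_of_mem_periodicPts_of_iterate_mem (hS : MapsTo f S S)
    (hx : x ∈ periodicPts f) {k : ℕ} (hk : f^[k] x ∈ S) : x ∈ S := by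
  obtain ⟨p, hp, hpx⟩ := hx
  have hle : k ≤ p * k := Nat.le_mul_of_pos_left k hp
  rw [← (hpx.mul_const k).eq, ← Nat.sub_add_cancel hle, iterate_add_apply]
  exact hS.iterate _ hk

lemma orbitsMeet_periodicPts [Finite V] (f : V → V) : OrbitsMeet f (periodicPts f) := by
  intro x
  obtain ⟨i, j, hij, heq⟩ := Finite.exists_ne_map_eq_of_infinite (fun i : ℕ => f^[i] x)
  wlog hlt : i < j generalizing i j
  · exact this j i hij.symm heq.symm (by omega)
  refine ⟨i, mk_mem_periodicPts (Nat.sub_pos_of_lt hlt) ?_⟩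
  rw [IsPeriodicPt, IsFixedPt, ← iterate_add_apply, Nat.sub_add_cancel hlt.le]
  exact heq.symm

lemma eq_root_of_mem_periodicPts (hf : f ∈ rootedForest {r}) (hx : x ∈ periodicPts f) :
    x = r := by
  obtain ⟨k, hk⟩ := hf.2 x
  exact mem_of_mem_periodicPts_of_iterate_mem (S := {r}) (mapsTo_singleton.mpr (hf.1 r rfl)) hx hk

lemma apply_ne_of_ne_root (hf : f ∈ rootedForest {r}) (hx : x ≠ r) : f x ≠ x := by
  intro hfx
  obtain ⟨k, hk⟩ := hf.2 x
  exact hx (by rwa [iterate_fixed hfx] at hk)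

lemma ne_root_of_apply_ne (hf : f ∈ rootedForest {r}) (hx : f x ≠ x) : x ≠ r := by
  rintro rfl
  exact hx (hf.1 x rfl)

lemma iterate_eq_of_le (hf : f ∈ rootedForest {r}) {k i : ℕ} (hk : f^[k] x = r)
    (hki : k ≤ i) : f^[i] x = r := by
  rw [← Nat.sub_add_cancel hki, iterate_add_apply, hk, iterate_fixed (hf.1 r rfl)]

noncomputable def replaceOn (S : Set V) (s : S → V) (f : V → V) : V → V :=
  extend Subtype.val s f

noncomputable def fixOn (S : Set V) (f : V → V) : V → V :=
  replaceOn S Subtype.val f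

lemma replaceOn_apply_of_mem (s : S → V) (f : V → V) {x : V} (hx : x ∈ S) :
    replaceOn S s f x = s ⟨x, hx⟩ :=
  extend_val_apply hx

lemma replaceOn_apply_of_notMem (s : S → V) (f : V → V) {x : V} (hx : x ∉ S) :
    replaceOn S s f x = f x :=
  extend_val_apply' hx

lemma replaceOn_restrict_fixOn (g : V → V) : replaceOn S (fun x => g x) (fixOn S g) = g := by
  funext x
  by_cases hx : x ∈ S
  · rw [replaceOn_apply_of_mem _ _ hx]
  · rw [replaceOn_apply_of_notMem _ _ hx, fixOn, replaceOn_apply_of_notMem _ _ hx]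

lemma fixOn_replaceOn (s : S → V) (hf : f ∈ rootedForest S) :
    fixOn S (replaceOn S s f) = f := by
  funext x
  by_cases hx : x ∈ S
  · rw [fixOn, replaceOn_apply_of_mem _ _ hx, hf.1 x hx]
  · rw [fixOn, replaceOn_apply_of_notMem _ _ hx, replaceOn_apply_of_notMem _ _ hx]

lemma OrbitsMeet.replaceOn (s : S → V) (hf : OrbitsMeet f S) : OrbitsMeet (replaceOn S s f) S :=
  hf.of_eqOn_compl fun _ hx => (replaceOn_apply_of_notMem s f hx).symm

lemma fixOn_mem_rootedForest (hg : OrbitsMeet g S) : fixOn S g ∈ rootedForest S :=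
  ⟨fun _ hx => replaceOn_apply_of_mem _ _ hx, hg.replaceOn _⟩

end RootedForest

section Endofunctions

variable {V : Type*} [Finite V] {S : Set V}

lemma periodicPts_replaceOn_perm (σ : Equiv.Perm S) {f : V → V} (hf : f ∈ rootedForest S) :
    periodicPts (replaceOn S (fun x => σ x) f) = S := by
  set g := replaceOn S (fun x => σ x) f
  have hsemi : Semiconj Subtype.val σ g := fun x =>
    (replaceOn_apply_of_mem (fun x => (σ x : V)) f x.2).symm
  have hmaps : MapsTo g S S := fun x hx => hsemi ⟨x, hx⟩ ▸ (σ ⟨x, hx⟩).2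
  refine Subset.antisymm (fun x hx => ?_) (fun x hx => ?_)
  · obtain ⟨k, hk⟩ := hf.2.replaceOn (fun x => (σ x : V)) x
    exact mem_of_mem_periodicPts_of_iterate_mem hmaps hx hk
  · exact hsemi.mapsTo_periodicPts (σ.injective.mem_periodicPts ⟨x, hx⟩)

noncomputable def periodicPtsFiberEquiv (S : Set V) :
    {g : V → V // periodicPts g = S} ≃ Equiv.Perm S × rootedForest S where
  toFun := fun ⟨g, hg⟩ =>
    (Equiv.ofBijective (MapsTo.restrict g S S _) (hg ▸ bijOn_periodicPts g).bijective,
      ⟨fixOn S g, fixOn_mem_rootedForest (hg ▸ orbitsMeet_periodicPts g)⟩)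
  invFun p := ⟨replaceOn S (fun x => p.1 x) p.2, periodicPts_replaceOn_perm p.1 p.2.2⟩
  left_inv := fun ⟨g, _⟩ => Subtype.ext (replaceOn_restrict_fixOn g)
  right_inv := fun ⟨σ, f⟩ => Prod.ext
    (Equiv.ext fun x => Subtype.ext (replaceOn_apply_of_mem (fun x => (σ x : V)) f.1 x.2 :))
    (Subtype.ext (fixOn_replaceOn _ f.2))

noncomputable def endoEquivSigmaPerm :
    (V → V) ≃ Σ S : Set V, Equiv.Perm S × rootedForest S :=
  (Equiv.sigmaFiberEquiv periodicPts).symm.trans (Equiv.sigmaCongrRight periodicPtsFiberEquiv)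

end Endofunctions

section Spine

variable {V : Type*} {S : Set V} {f : V → V} {r b : V}

def spine (f : V → V) (b : V) : Set V := range fun i => f^[i] b

lemma injOn_iterate (hf : f ∈ rootedForest {r}) {k : ℕ}
    (hmin : ∀ i < k, f^[i] b ≠ r) : InjOn (fun i => f^[i] b) (Iic k) := by
  intro i hi j hj hij
  by_contra hne
  wlog hlt : i < j generalizing i j
  · exact this hj hi hij.symm (Ne.symm hne) (by omega)
  have hper : f^[i] b ∈ periodicPts f := mk_mem_periodicPts (Nat.sub_pos_of_lt hlt) <| by
    rw [IsPeriodicPt, IsFixedPt, ← iterate_add_apply, Nat.sub_add_cancel hlt.le]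
    exact hij.symm
  exact hmin i (by simp at hj; omega) (eq_root_of_mem_periodicPts hf hper)

lemma bijective_iterate_fin (hf : f ∈ rootedForest {r}) {k : ℕ} (hk : f^[k] b = r)
    (hmin : ∀ i < k, f^[i] b ≠ r) :
    Bijective fun i : Fin (k + 1) => (⟨f^[i] b, i, rfl⟩ : spine f b) := by
  refine ⟨fun i j hij => Fin.ext ?_, ?_⟩
  · exact injOn_iterate hf hmin (mem_Iic.mpr (Nat.lt_succ_iff.mp i.2))
      (mem_Iic.mpr (Nat.lt_succ_iff.mp j.2)) (congrArg Subtype.val hij)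
  · rintro ⟨_, i, rfl⟩
    refine ⟨⟨min i k, Nat.lt_succ_of_le (min_le_right i k)⟩, Subtype.ext ?_⟩
    rcases le_total i k with h | h
    · simp only [min_eq_left h]
    · simp only [min_eq_right h, hk, iterate_eq_of_le hf hk h]

lemma exists_card_spine (hf : f ∈ rootedForest {r}) (b : V) :
    ∃ k, Nat.card (spine f b) = k + 1 ∧ f^[k] b = r ∧ ∀ i < k, f^[i] b ≠ r := by
  classical
  have h : ∃ k, f^[k] b = r := hf.2 b
  have hmin : ∀ i < Nat.find h, f^[i] b ≠ r := fun i hi => Nat.find_min h hi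
  refine ⟨Nat.find h, ?_, Nat.find_spec h, hmin⟩
  rw [← Nat.card_eq_of_bijective _ (bijective_iterate_fin hf (Nat.find_spec h) hmin),
    Nat.card_eq_fintype_card, Fintype.card_fin]

lemma iterate_card_spine_sub_one (hf : f ∈ rootedForest {r}) (b : V) :
    f^[Nat.card (spine f b) - 1] b = r := by
  obtain ⟨k, hc, hk, -⟩ := exists_card_spine hf b
  rwa [hc, Nat.add_sub_cancel]

lemma bijective_iterate_of_spine_eq (hf : f ∈ rootedForest {r}) (hS : spine f b = S) :
    Bijective fun j : Fin (Nat.card S) => (⟨f^[j] b, hS ▸ mem_range_self (j : ℕ)⟩ : S) := by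
  subst hS
  obtain ⟨k, hc, hk, hmin⟩ := exists_card_spine hf b
  exact (bijective_iterate_fin hf hk hmin).comp (finCongr hc).bijective

end Spine

section Enumeration

variable {V : Type*} {S : Set V} {m : ℕ} (e : Fin m ≃ S) (hm : 0 < m)

def enumStop (i : ℕ) : S := e ⟨min i (m - 1), by omega⟩

def enumSucc (x : S) : V := enumStop e hm ((e.symm x : ℕ) + 1)

variable {e hm}

lemma enumStop_of_lt {i : ℕ} (hi : i < m) : enumStop e hm i = e ⟨i, hi⟩ := by
  simp only [enumStop, Nat.min_eq_left (Nat.le_sub_one_of_lt hi)]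

lemma enumStop_of_le {i : ℕ} (hi : m - 1 ≤ i) : enumStop e hm i = enumStop e hm (m - 1) := by
  simp only [enumStop, Nat.min_eq_right hi, min_self]

lemma enumSucc_enumStop (i : ℕ) : enumSucc e hm (enumStop e hm i) = enumStop e hm (i + 1) := by
  simp only [enumSucc, enumStop, Equiv.symm_apply_apply]
  congr 3
  omega

lemma replaceOn_enumSucc_enumStop (h : V → V) (i : ℕ) :
    replaceOn S (enumSucc e hm) h (enumStop e hm i) = enumStop e hm (i + 1) := by
  rw [replaceOn_apply_of_mem _ _ (enumStop e hm i).2, Subtype.coe_eta, enumSucc_enumStop]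

lemma iterate_replaceOn_enumSucc (h : V → V) (i j : ℕ) :
    (replaceOn S (enumSucc e hm) h)^[j] (enumStop e hm i) = enumStop e hm (i + j) := by
  induction j with
  | zero => rfl
  | succ j ih => rw [iterate_succ_apply', ih, replaceOn_enumSucc_enumStop, Nat.add_assoc]

lemma enumStop_symm (x : S) : enumStop e hm (e.symm x) = x := by
  rw [enumStop_of_lt (e.symm x).2, Fin.eta, Equiv.apply_symm_apply]

lemma replaceOn_enumSucc_mem_rootedForest {h : V → V} (hh : h ∈ rootedForest S) :
    replaceOn S (enumSucc e hm) h ∈ rootedForest {(enumStop e hm (m - 1) : V)} := by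
  refine ⟨fun x hx => ?_, (hh.2.replaceOn _).trans fun x hx => ⟨m - 1, ?_⟩⟩
  · rw [mem_singleton_iff.mp hx, replaceOn_enumSucc_enumStop, enumStop_of_le (by omega)]
  · have hx' : x = enumStop e hm (e.symm ⟨x, hx⟩) := by rw [enumStop_symm]
    rw [hx', iterate_replaceOn_enumSucc, enumStop_of_le (i := _ + (m - 1)) (by omega)]
    rfl

lemma spine_replaceOn_enumSucc (h : V → V) :
    spine (replaceOn S (enumSucc e hm) h) (enumStop e hm 0) = S := by
  refine Subset.antisymm ?_ fun x hx => ⟨e.symm ⟨x, hx⟩, ?_⟩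
  · rintro _ ⟨i, rfl⟩
    dsimp only
    rw [iterate_replaceOn_enumSucc]
    exact Subtype.property _
  · simp only [iterate_replaceOn_enumSucc, Nat.zero_add, enumStop_symm]

end Enumeration

section Vertebrate

variable {V : Type*} {S : Set V} {f : V → V} {r b : V}

lemma root_mem_spine (hf : f ∈ rootedForest {r}) (b : V) : r ∈ spine f b :=
  let ⟨k, hk⟩ := hf.2 b
  ⟨k, hk⟩

lemma enumSucc_eq_of_enumStop_eq {m : ℕ} {e : Fin m ≃ S} {hm : 0 < m}
    (he : ∀ i, (enumStop e hm i : V) = f^[i] b) : enumSucc e hm = fun x : S => f x := by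
  funext x
  rw [← enumStop_symm (e := e) (hm := hm) x, enumSucc_enumStop, he, he, iterate_succ_apply']

lemma card_pos_of_mem_rootedForest [Finite V] [Nonempty V] (hf : f ∈ rootedForest S) :
    0 < Nat.card S :=
  let ⟨_, hk⟩ := hf.2 (Classical.arbitrary V)
  Nat.card_pos_iff.mpr ⟨⟨_, hk⟩, inferInstance⟩

lemma enumStop_ofBijective_iterate (hf : f ∈ rootedForest {r}) (hS : spine f b = S)
    (hm : 0 < Nat.card S) (i : ℕ) :
    (enumStop (Equiv.ofBijective _ (bijective_iterate_of_spine_eq hf hS)) hm i : V) = f^[i] b := by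
  subst hS
  change f^[min i (Nat.card (spine f b) - 1)] b = f^[i] b
  rcases le_total i (Nat.card (spine f b) - 1) with h | h
  · rw [min_eq_left h]
  · rw [min_eq_right h, iterate_card_spine_sub_one hf,
      iterate_eq_of_le hf (iterate_card_spine_sub_one hf b) h]

/-- Joyal's vertebrates `(b, (r, f))`: a tree given by its parent function `f` towards the
root `r`, with a second marked vertex `b`. -/
abbrev Vertebrate (V : Type*) : Type _ := V × {p : V × (V → V) // p.2 ∈ rootedForest {p.1}}

noncomputable def spineFiberEquiv [Finite V] [Nonempty V] (S : Set V) :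
    {t : Vertebrate V // spine t.2.1.2 t.1 = S} ≃
      (Fin (Nat.card S) ≃ S) × rootedForest S where
  toFun := fun ⟨(b, ⟨(_, f), hf⟩), hS⟩ =>
    (Equiv.ofBijective _ (bijective_iterate_of_spine_eq hf hS),
      ⟨fixOn S f, fixOn_mem_rootedForest
        (hf.2.mono (singleton_subset_iff.mpr (hS ▸ root_mem_spine hf b)))⟩)
  invFun := fun ⟨e, h⟩ =>
    have hm := card_pos_of_mem_rootedForest h.2
    ⟨(enumStop e hm 0, ⟨(enumStop e hm (Nat.card S - 1), replaceOn S (enumSucc e hm) h),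
      replaceOn_enumSucc_mem_rootedForest h.2⟩), spine_replaceOn_enumSucc h.1⟩
  left_inv := fun ⟨(b, ⟨(r, f), hf⟩), hS⟩ => by
    have he := enumStop_ofBijective_iterate hf hS (card_pos_of_mem_rootedForest
      (fixOn_mem_rootedForest (hf.2.mono (singleton_subset_iff.mpr (hS ▸ root_mem_spine hf b)))))
    refine Subtype.ext (Prod.ext (he 0) (Subtype.ext (Prod.ext ?_ ?_)))
    · refine (he _).trans ?_
      subst hS
      exact iterate_card_spine_sub_one hf b
    · exact (congrArg (replaceOn S · _) (enumSucc_eq_of_enumStop_eq he)).trans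
        (replaceOn_restrict_fixOn f)
  right_inv := fun ⟨e, h⟩ => by
    refine Prod.ext (Equiv.ext fun j => Subtype.ext ?_) (Subtype.ext (fixOn_replaceOn _ h.2))
    exact (iterate_replaceOn_enumSucc h.1 0 j).trans (by rw [Nat.zero_add, enumStop_of_lt j.2])

end Vertebrate

namespace SimpleGraph

variable {V : Type*} {G : SimpleGraph V} {f : V → V} {r x y z : V}

def parentGraph (f : V → V) : SimpleGraph V := fromRel fun x y => f x = y

lemma parentGraph_adj : (parentGraph f).Adj x y ↔ x ≠ y ∧ (f x = y ∨ f y = x) :=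
  fromRel_adj _ x y

lemma Connected.exists_adj_dist_add_one (hG : G.Connected) (hx : x ≠ r) :
    ∃ y, G.Adj x y ∧ G.dist r y + 1 = G.dist r x := by
  obtain ⟨p, -, hp⟩ := hG.exists_path_of_dist r x
  have hnil : ¬p.Nil := Walk.not_nil_of_ne (Ne.symm hx)
  have hadj := p.adj_penultimate hnil
  refine ⟨p.penultimate, hadj.symm, le_antisymm ?_ ?_⟩
  · rw [← hp, ← p.length_dropLast_add_one hnil]
    exact Nat.add_le_add_right (dist_le _) 1
  · calc G.dist r x ≤ G.dist r p.penultimate + G.dist p.penultimate x := hG.dist_triangle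
      _ = G.dist r p.penultimate + 1 := by rw [dist_eq_one_iff_adj.mpr hadj]

lemma IsAcyclic.eq_of_adj_of_dist_add_one (hG : G.IsAcyclic) (hr : G.Reachable r x)
    (hy : G.Adj x y) (hz : G.Adj x z) (hdy : G.dist r y + 1 = G.dist r x)
    (hdz : G.dist r z + 1 = G.dist r x) : y = z := by
  classical
  obtain ⟨p, hp, -⟩ := hr.exists_path_of_dist
  have key : ∀ w, G.Adj x w → G.dist r w + 1 = G.dist r x → w = p.penultimate := by
    intro w hw hdw
    obtain ⟨q, hq, hqlen⟩ := (hr.trans hw.reachable).exists_path_of_dist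
    have hxq : x ∉ q.support := fun hxq => by
      have := (dist_le (q.takeUntil x hxq)).trans (q.length_takeUntil_le_length hxq)
      omega
    exact hG.eq_penultimate_of_adj_end hp hw
      (hG.mem_support_of_ne_mem_support_of_adj_of_isPath hp hq hw hxq)
  rw [key y hy hdy, key z hz hdz]

lemma IsTree.existsUnique_adj_dist_add_one (hG : G.IsTree) (hx : x ≠ r) :
    ∃! y, G.Adj x y ∧ G.dist r y + 1 = G.dist r x :=
  let ⟨y, hy⟩ := hG.connected.exists_adj_dist_add_one hx
  ⟨y, hy, fun _ hz =>
    hG.isAcyclic.eq_of_adj_of_dist_add_one (hG.connected r x) hz.1 hy.1 hz.2 hy.2⟩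

open Classical in
noncomputable def IsTree.parent (hG : G.IsTree) (r x : V) : V :=
  if hx : x = r then r else (hG.existsUnique_adj_dist_add_one hx).exists.choose

lemma IsTree.parent_root (hG : G.IsTree) : hG.parent r r = r := dif_pos rfl

lemma IsTree.parent_spec (hG : G.IsTree) (hx : x ≠ r) :
    G.Adj x (hG.parent r x) ∧ G.dist r (hG.parent r x) + 1 = G.dist r x := by
  rw [IsTree.parent, dif_neg hx]
  exact (hG.existsUnique_adj_dist_add_one hx).exists.choose_spec

lemma IsTree.adj_parent (hG : G.IsTree) (hx : hG.parent r x ≠ x) : G.Adj x (hG.parent r x) :=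
  (hG.parent_spec fun hxr => hx (by rw [hxr, hG.parent_root])).1

lemma IsTree.parent_eq_of_adj (hG : G.IsTree) (hy : G.Adj x y) (hd : G.dist r y + 1 = G.dist r x) :
    hG.parent r x = y := by
  have hx : x ≠ r := by rintro rfl; simp at hd
  exact (hG.existsUnique_adj_dist_add_one hx).unique (hG.parent_spec hx) ⟨hy, hd⟩

lemma IsTree.parent_mem_rootedForest (hG : G.IsTree) (r : V) :
    hG.parent r ∈ rootedForest {r} := by
  refine ⟨fun x hx => hx ▸ hG.parent_root, fun x => ⟨G.dist r x, ?_⟩⟩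
  induction hd : G.dist r x generalizing x with
  | zero => exact (hG.connected.dist_eq_zero_iff.mp hd).symm
  | succ d ih =>
    have hx : x ≠ r := by rintro rfl; simp at hd
    rw [iterate_succ_apply]
    exact ih _ (by have := (hG.parent_spec hx).2; omega)

lemma IsTree.parentGraph_parent (hG : G.IsTree) (r : V) : parentGraph (hG.parent r) = G := by
  ext x y
  rw [parentGraph_adj]
  constructor
  · rintro ⟨hxy, h | h⟩
    · exact h ▸ hG.adj_parent fun h' => hxy (h'.symm.trans h)
    · exact (h ▸ hG.adj_parent fun h' => hxy (h.symm.trans h')).symm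
  · intro hadj
    refine ⟨hadj.ne, ?_⟩
    rcases hG.dist_eq_dist_add_one_of_adj r hadj with h | h
    · exact Or.inl (hG.parent_eq_of_adj hadj h.symm)
    · exact Or.inr (hG.parent_eq_of_adj hadj.symm h.symm)

lemma adj_parentGraph_apply (hf : f ∈ rootedForest {r}) (hx : x ≠ r) :
    (parentGraph f).Adj x (f x) :=
  parentGraph_adj.mpr ⟨(apply_ne_of_ne_root hf hx).symm, Or.inl rfl⟩

lemma reachable_parentGraph_root (hf : f ∈ rootedForest {r}) (x : V) :
    (parentGraph f).Reachable x r := by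
  obtain ⟨k, hk⟩ := hf.2 x
  induction k generalizing x with
  | zero => exact hk ▸ Reachable.refl x
  | succ k ih =>
    by_cases hx : x = r
    · exact hx ▸ Reachable.refl x
    · exact (adj_parentGraph_apply hf hx).reachable.trans (ih (f x) hk)

noncomputable def nonRootEquivEdgeSet (hf : f ∈ rootedForest {r}) :
    {x // x ≠ r} ≃ (parentGraph f).edgeSet :=
  Equiv.ofBijective (fun x => ⟨s(x.1, f x.1), adj_parentGraph_apply hf x.2⟩) <| by
  refine ⟨fun x y hxy => Subtype.ext ?_, ?_⟩
  · rcases Sym2.eq_iff.mp (congrArg Subtype.val hxy) with h | ⟨hxy, hyx⟩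
    · exact h.1
    · have hper : y.1 ∈ periodicPts f :=
        mk_mem_periodicPts two_pos (show f (f y) = y by rw [← hxy, hyx])
      exact absurd (eq_root_of_mem_periodicPts hf hper) y.2
  · rintro ⟨e, he⟩
    induction e using Sym2.ind with
    | _ a b =>
      obtain ⟨hab, h | h⟩ := parentGraph_adj.mp he
      · exact ⟨⟨a, ne_root_of_apply_ne hf (h ▸ hab.symm)⟩, Subtype.ext (by simp [h])⟩
      · exact ⟨⟨b, ne_root_of_apply_ne hf (h ▸ hab)⟩,
          Subtype.ext (by simp [h, Sym2.eq_swap])⟩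

lemma isTree_parentGraph [Finite V] (hf : f ∈ rootedForest {r}) : (parentGraph f).IsTree := by
  classical
  rw [isTree_iff_connected_and_card]
  refine ⟨(connected_iff _).mpr ⟨fun x y => (reachable_parentGraph_root hf x).trans
    (reachable_parentGraph_root hf y).symm, ⟨r⟩⟩, ?_⟩
  rw [← Nat.card_congr (nonRootEquivEdgeSet hf), ← Finite.card_option,
    Nat.card_congr (Equiv.optionSubtypeNe r)]

lemma IsTree.parent_parentGraph (hT : (parentGraph f).IsTree) (hf : f ∈ rootedForest {r}) :
    hT.parent r = f := by
  -- If `f x` were farther from `r` than `x`, the same would hold for the tree parent of `x`,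
  -- and so on down to `r`, which `f` fixes.
  have hle : ∀ d x, (parentGraph f).dist r x = d → (parentGraph f).dist r (f x) ≤ d := by
    intro d
    induction d with
    | zero =>
      intro x hx
      rw [← hT.connected.dist_eq_zero_iff.mp hx, hf.1 r rfl, dist_self]
    | succ d ih =>
      intro x hx
      have hxr : x ≠ r := by rintro rfl; simp at hx
      obtain ⟨hadj, hdist⟩ := hT.parent_spec hxr
      rcases (parentGraph_adj.mp hadj).2 with h | h
      · rw [h]
        omega
      · have := ih (hT.parent r x) (by omega)
        rw [h] at this
        omega
  funext x
  by_cases hx : x = r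
  · rw [hx, hT.parent_root, hf.1 r rfl]
  · have hadj := adj_parentGraph_apply hf hx
    refine hT.parent_eq_of_adj hadj ?_
    have := hle _ x rfl
    rcases hT.dist_eq_dist_add_one_of_adj r hadj with h | h <;> omega

noncomputable def isTreeEquivRootedForest [Finite V] (r : V) :
    {T : SimpleGraph V // T.IsTree} ≃ rootedForest {r} where
  toFun T := ⟨T.2.parent r, T.2.parent_mem_rootedForest r⟩
  invFun f := ⟨parentGraph f, isTree_parentGraph f.2⟩
  left_inv T := Subtype.ext (T.2.parentGraph_parent r)
  right_inv f := Subtype.ext (IsTree.parent_parentGraph (isTree_parentGraph f.2) f.2)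

end SimpleGraph

section Cayley

variable (V : Type*) [Finite V] [Nonempty V]

noncomputable def vertebrateEquivEndo : Vertebrate V ≃ (V → V) :=
  (Equiv.sigmaFiberEquiv fun t : Vertebrate V => spine t.2.1.2 t.1).symm
    |>.trans (Equiv.sigmaCongrRight spineFiberEquiv)
    |>.trans (Equiv.sigmaCongrRight fun S =>
      Equiv.prodCongrLeft fun _ => (Finite.equivFin S).symm.equivCongr (Equiv.refl S))
    |>.trans endoEquivSigmaPerm.symm

noncomputable def vertebrateEquivTree :
    Vertebrate V ≃ V × V × {T : SimpleGraph V // T.IsTree} :=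
  Equiv.prodCongrRight fun _ =>
    (Equiv.subtypeProdEquivSigmaSubtype fun r f => f ∈ rootedForest {r})
    |>.trans (Equiv.sigmaCongrRight fun r => (SimpleGraph.isTreeEquivRootedForest r).symm)
    |>.trans (Equiv.sigmaEquivProd _ _)

theorem card_mul_card_mul_card_isTree :
    Nat.card V * (Nat.card V * Nat.card {T : SimpleGraph V // T.IsTree}) =
      Nat.card V ^ Nat.card V := by
  rw [← Nat.card_prod, ← Nat.card_prod, ← Nat.card_congr (vertebrateEquivTree V),
    Nat.card_congr (vertebrateEquivEndo V), Nat.card_fun]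

theorem card_isTree :
    Nat.card {T : SimpleGraph V // T.IsTree} = Nat.card V ^ (Nat.card V - 2) := by
  have key := card_mul_card_mul_card_isTree V
  set n := Nat.card V
  have hpos : 0 < n := Nat.card_pos
  obtain h | h : n = 1 ∨ 2 ≤ n := by omega
  · rw [h] at key ⊢
    simpa using key
  · rw [← Nat.sub_add_cancel h, pow_succ', pow_succ', Nat.sub_add_cancel h] at key
    exact Nat.eq_of_mul_eq_mul_left hpos (Nat.eq_of_mul_eq_mul_left hpos key)

end Cayley

/-- **Cayley's formula** (Corollary 3): the number of spanning trees of the complete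
graph on `n` vertices — i.e. the number of tree graphs on the vertex set `Fin n` —
is `n ^ (n − 2)`. -/
theorem card_spanning_trees_complete_graph (n : ℕ) (hn : 1 ≤ n) :
    Nat.card {T : SimpleGraph (Fin n) // T.IsTree} = n ^ (n - 2) := by
  have : Nonempty (Fin n) := ⟨⟨0, hn⟩⟩
  simpa using card_isTree (Fin n)
end

section
/- Let Γ be a finite abelian group of order n and (W_h)_{h∈Γ} a family of m × m complex matrices. Let M be the block matrix indexed by Γ × Γ whose (g,k)-block is W_{g⁻¹k}. Then det(M) = ∏_χ det(∑_{h∈Γ} χ(h) W_h), where χ runs over the characters of Γ. -/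
open Matrix

/-- The determinant of the `Γ × Γ` block matrix whose `(g,k)`-block is `W_{g⁻¹k}`
factors over the characters of the finite abelian group `Γ` as
`∏_χ det (∑_h χ(h) • W_h)`. -/
theorem det_block_group_matrix {Γ : Type} [CommGroup Γ] [Fintype Γ] [DecidableEq Γ]
    [Fintype (Γ →* ℂˣ)] {m : ℕ} (W : Γ → Matrix (Fin m) (Fin m) ℂ) :
    (Matrix.of fun p q : Γ × Fin m => W (p.1⁻¹ * q.1) p.2 q.2).det =
      ∏ χ : Γ →* ℂˣ, (∑ h : Γ, (χ h : ℂ) • W h).det := by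
  classical
  have hexp : NeZero ((Monoid.exponent Γ : ℂ)) :=
    ⟨by exact_mod_cast Monoid.exponent_ne_zero_of_finite⟩
  obtain ⟨e⟩ := CommGroup.monoidHom_mulEquiv_of_hasEnoughRootsOfUnity Γ ℂ
  have hcard : (Fintype.card Γ : ℂ) ≠ 0 := by
    exact_mod_cast Fintype.card_ne_zero
  set M : Matrix (Γ × Fin m) (Γ × Fin m) ℂ :=
    Matrix.of fun p q : Γ × Fin m => W (p.1⁻¹ * q.1) p.2 q.2 with hM
  set B : Γ → Matrix (Fin m) (Fin m) ℂ := fun g => ∑ h : Γ, (e.symm g h : ℂ) • W h with hB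
  set P : Matrix (Γ × Fin m) (Γ × Fin m) ℂ :=
    fun p q => if p.2 = q.2 then (e.symm q.1 p.1 : ℂ) else 0 with hP
  set D : Matrix (Γ × Fin m) (Γ × Fin m) ℂ :=
    fun p q => if p.1 = q.1 then B q.1 p.2 q.2 else 0 with hD
  set Q : Matrix (Γ × Fin m) (Γ × Fin m) ℂ :=
    fun p q => (Fintype.card Γ : ℂ)⁻¹ *
      (if p.2 = q.2 then (((e.symm p.1 q.1)⁻¹ : ℂˣ) : ℂ) else 0) with hQ
  -- orthogonality of characters
  have horth : ∀ k k' : Γ, (∑ g : Γ, (((e.symm k g)⁻¹ : ℂˣ) : ℂ) * (e.symm k' g : ℂ)) =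
      if k = k' then (Fintype.card Γ : ℂ) else 0 := by
    intro k k'
    by_cases hkk : k = k'
    · subst hkk
      simp [Finset.card_univ]
    · rw [if_neg hkk]
      have hne1 : (Units.coeHom ℂ).comp ((e.symm k)⁻¹ * e.symm k') ≠ 1 := by
        intro hf
        apply hkk
        apply e.symm.injective
        rw [← inv_mul_eq_one]
        ext g
        have h2 : ((((e.symm k)⁻¹ * e.symm k') g : ℂˣ) : ℂ) = 1 := by
          have h3 := DFunLike.congr_fun hf g
          simpa using h3
        simpa [Units.val_inv_eq_inv_val] using h2
      have key := sum_hom_units_eq_zero _ hne1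
      rw [← key]
      refine Finset.sum_congr rfl fun g _ => ?_
      simp [MonoidHom.mul_apply]
  have hMP : M * P = P * D := by
    ext ⟨g, i⟩ ⟨k, j⟩
    rw [mul_apply, mul_apply, Fintype.sum_prod_type, Fintype.sum_prod_type]
    simp only [hM, hP, hD, Matrix.of_apply, mul_ite, mul_zero, ite_mul, zero_mul,
      Finset.sum_ite_eq, Finset.sum_ite_eq', Finset.mem_univ, if_true]
    have collapse : ∀ x : Γ,
        (∑ x_1 : Fin m, if x = k then if i = x_1 then (e.symm x g : ℂ) * B k x_1 j else 0 else 0)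
          = if x = k then (e.symm x g : ℂ) * B k i j else 0 := by
      intro x
      split <;> simp
    simp only [collapse, Finset.sum_ite_eq', Finset.mem_univ, if_true]
    simp only [hB, Matrix.sum_apply, Matrix.smul_apply, smul_eq_mul]
    rw [Finset.mul_sum,
      ← Equiv.sum_comp (Equiv.mulLeft g) (fun x => W (g⁻¹ * x) i j * (e.symm k x : ℂ))]
    refine Finset.sum_congr rfl fun h _ => ?_
    simp only [Equiv.coe_mulLeft, inv_mul_cancel_left, _root_.map_mul, Units.val_mul]
    ring
  have hQP : Q * P = 1 := by
    ext ⟨k, j⟩ ⟨k', j'⟩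
    rw [mul_apply, Fintype.sum_prod_type]
    simp only [hQ, hP, mul_ite, mul_zero, ite_mul, zero_mul,
      Finset.sum_ite_eq, Finset.sum_ite_eq', Finset.mem_univ, if_true, mul_assoc]
    by_cases hj : j = j'
    · rw [Finset.sum_congr rfl (fun x _ => if_pos hj), ← Finset.mul_sum, horth]
      by_cases hk : k = k'
      · simp [Matrix.one_apply, hk, hj, Prod.ext_iff, inv_mul_cancel₀ hcard]
      · simp [Matrix.one_apply, hk, Prod.ext_iff]
    · rw [Finset.sum_congr rfl (fun x _ => if_neg hj)]
      simp [Matrix.one_apply, hj, Prod.ext_iff]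
  have hPdet : P.det ≠ 0 := by
    intro h
    have h1 := congrArg Matrix.det hQP
    rw [det_mul, h, mul_zero, det_one] at h1
    exact zero_ne_one h1
  have hMD : M.det = D.det := by
    have h1 : M.det * P.det = D.det * P.det := by
      rw [← det_mul, hMP, det_mul, mul_comm]
    exact mul_right_cancel₀ hPdet h1
  have hDdet : D.det = ∏ g : Γ, (B g).det := by
    have hDre : D = (Matrix.reindex (Equiv.prodComm (Fin m) Γ) (Equiv.prodComm (Fin m) Γ))
        (Matrix.blockDiagonal B) := by
      ext ⟨g, i⟩ ⟨k, j⟩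
      by_cases h : g = k <;> simp [hD, Matrix.blockDiagonal_apply, h]
    rw [hDre, Matrix.det_reindex_self, Matrix.det_blockDiagonal]
  rw [hMD, hDdet,
    ← Equiv.prod_comp e.symm.toEquiv (fun χ : Γ →* ℂˣ => (∑ h : Γ, (χ h : ℂ) • W h).det)]
  rfl
end
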